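/- Suppose θ and λ are regular cardinals and either λ = θ^{+η} for some ordinal η with 1 < η < θ, or λ is θ-inaccessible. Let D be a locally downward coherent θ-covering matrix for λ. Then S^λ_{>θ} \ A_D is non-stationary in λ. -/

import Mathlib

/-!
Call `g < λ` a pushdown level for `E ⊆ λ` if every trace `E ∩ D(i, β)` of a column of `D` lies
in a single column `D(j, g)`; local downward coherence says that every `E` of size `≤ θ` has one.
Each of the two hypotheses on `λ` extends this to every `E` of size `< λ`. If `λ` is
`θ`-inaccessible, `E` has fewer than `λ` subsets of size `≤ θ`, and a bound of their levels is a
level for `E`. If `λ = θ^{+η}`, no cardinal in `(θ, λ)` has cofinality `θ`, which makes an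
induction on `|E|` work. Now let `h(α)` be a pushdown level for `α`. A closure point `β` of `h`
with `cf β > θ` has a column `A = D(i, β)` unbounded in `β`, and `A ∩ γ ⊆ D(j, h(γ))` for
`γ < β` shows that `β` is good; the closure points of `h` form a club.
-/

noncomputable section

universe u

open Cardinal Set

/-- The order type of a set of ordinals: the unique ordinal `o` such that `s` is
order-isomorphic to `Set.Iio o` (and `0` if there is no such ordinal). -/
def otp (s : Set Ordinal) : Ordinal :=
  sInf {o : Ordinal | Nonempty (s ≃o Set.Iio o)}

/-- `A` is unbounded in `β`. -/
def IsUnboundedIn (A : Set Ordinal) (β : Ordinal) : Prop :=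
  ∀ γ < β, ∃ δ ∈ A, γ ≤ δ

/-- `γ` is a limit of elements of `C`. -/
def IsAccPt (C : Set Ordinal) (γ : Ordinal) : Prop :=
  ∀ δ < γ, ∃ ε ∈ C, δ < ε ∧ ε < γ

/-- `C` is club in `β`: a subset of `β`, unbounded in `β`, and closed under limits below `β`. -/
def IsClubIn (C : Set Ordinal) (β : Ordinal) : Prop :=
  C ⊆ Set.Iio β ∧ IsUnboundedIn C β ∧ ∀ γ < β, 0 < γ → IsAccPt C γ → γ ∈ C

/-- `S` is stationary in `β`: it meets every club in `β`. -/
def IsStationaryIn (S : Set Ordinal) (β : Ordinal) : Prop :=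
  ∀ C, IsClubIn C β → (S ∩ C).Nonempty

/-- `D` is a `θ`-covering matrix for `lam`. -/
def IsCoveringMatrix (θ lam : Cardinal) (D : Ordinal → Ordinal → Set Ordinal) : Prop :=
  (∀ β < lam.ord, (⋃ i ∈ Set.Iio θ.ord, D i β) = Set.Iio β) ∧
  (∀ β < lam.ord, ∀ i j, i < j → j < θ.ord → D i β ⊆ D j β) ∧
  (∀ β γ, β < γ → γ < lam.ord → ∀ i < θ.ord, ∃ j < θ.ord, D i β ⊆ D j γ)

/-- `D` is transitive. -/
def TransitiveMatrix (θ lam : Cardinal) (D : Ordinal → Ordinal → Set Ordinal) : Prop :=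
  ∀ α β, α < β → β < lam.ord → ∀ i < θ.ord, α ∈ D i β → D i α ⊆ D i β

/-- `D` is uniform: every limit `β < lam` has some `D i β` containing a club in `β`. -/
def UniformMatrix (θ lam : Cardinal) (D : Ordinal → Ordinal → Set Ordinal) : Prop :=
  ∀ β < lam.ord, Order.IsSuccLimit β → ∃ i < θ.ord, ∃ C ⊆ D i β, IsClubIn C β

/-- `D` is normal: the order types of its entries are bounded below `lam`. -/
def NormalMatrix (θ lam : Cardinal) (D : Ordinal → Ordinal → Set Ordinal) : Prop :=
  ∃ b < lam.ord, ∀ i < θ.ord, ∀ γ < lam.ord, otp (D i γ) < b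

/-- `β_D`: the least ordinal strictly above the order types of all entries of `D`. -/
def matrixBound (θ lam : Cardinal) (D : Ordinal → Ordinal → Set Ordinal) : Ordinal :=
  sInf {b | ∀ i < θ.ord, ∀ γ < lam.ord, otp (D i γ) < b}

/-- `D` is downward coherent. -/
def DownwardCoherent (θ lam : Cardinal) (D : Ordinal → Ordinal → Set Ordinal) : Prop :=
  ∀ α β, α < β → β < lam.ord → ∀ i < θ.ord, ∃ j < θ.ord, D i β ∩ Set.Iio α ⊆ D j α

/-- `D` is locally downward coherent. -/
def LocallyDownwardCoherent (θ lam : Cardinal.{u})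
    (D : Ordinal.{u} → Ordinal.{u} → Set Ordinal.{u}) : Prop :=
  ∀ X : Set Ordinal.{u}, X ⊆ Set.Iio lam.ord → #X ≤ Cardinal.lift.{u + 1} θ →
    ∃ γX < lam.ord, ∀ β < lam.ord, ∀ i < θ.ord, ∃ j < θ.ord,
      X ∩ D i β ⊆ X ∩ D j γX

/-- `D` is strongly locally downward coherent. -/
def StronglyLocallyDownwardCoherent (θ lam : Cardinal.{u})
    (D : Ordinal.{u} → Ordinal.{u} → Set Ordinal.{u}) : Prop :=
  ∀ X : Set Ordinal.{u}, X ⊆ Set.Iio lam.ord → #X ≤ Cardinal.lift.{u + 1} θ →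
    ∃ γX < lam.ord, ∀ β, γX ≤ β → β < lam.ord →
      ∃ i < θ.ord, ∀ j, i ≤ j → j < θ.ord → X ∩ D j β = X ∩ D j γX

/-- `D` covers `[T]^κ`. -/
def Covers (θ lam : Cardinal.{u}) (D : Ordinal.{u} → Ordinal.{u} → Set Ordinal.{u})
    (T : Set Ordinal.{u}) (κ : Cardinal.{u}) : Prop :=
  ∀ X ⊆ T, #X = Cardinal.lift.{u + 1} κ → ∃ i < θ.ord, ∃ β < lam.ord, X ⊆ D i β

/-- The covering property `CP(D)`. -/
def CP (θ lam : Cardinal) (D : Ordinal → Ordinal → Set Ordinal) : Prop :=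
  ∃ T ⊆ Set.Iio lam.ord, IsUnboundedIn T lam.ord ∧ Covers θ lam D T θ

/-- `CP(lam, θ)`: `CP(D)` holds for every locally downward coherent `θ`-covering matrix `D`. -/
def CPAll (θ lam : Cardinal) : Prop :=
  ∀ D, IsCoveringMatrix θ lam D → LocallyDownwardCoherent θ lam D → CP θ lam D

/-- `A_D`: the set of good points for `D`. -/
def goodPoints (θ lam : Cardinal) (D : Ordinal → Ordinal → Set Ordinal) : Set Ordinal :=
  {β | β < lam.ord ∧ θ < Ordinal.cof β ∧
    ∃ A ⊆ Set.Iio β, IsUnboundedIn A β ∧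
      ∀ γ < β, ∃ α < β, ∃ i < θ.ord, A ∩ Set.Iio γ ⊆ D i α}

/-- `θ^{+η}`: the `η`-th iterated cardinal successor of `θ`. -/
def iterSucc (θ : Cardinal) (η : Ordinal) : Cardinal :=
  Ordinal.limitRecOn η θ (fun _ ih => Order.succ ih)
    (fun o _ ih => ⨆ i : Set.Iio o, ih i.1 i.2)

/-- `f <* g` mod bounded subsets of `θ`. -/
def ltStar (θ : Cardinal) (f g : Ordinal → Ordinal) : Prop :=
  ∃ i < θ.ord, ∀ j, i ≤ j → j < θ.ord → f j < g j

/-- `⟨f β : β < δ⟩` is a club-increasing sequence of functions from `θ` to the ordinals. -/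
def ClubIncreasing (θ : Cardinal) (δ : Ordinal) (f : Ordinal → Ordinal → Ordinal) : Prop :=
  (∀ β < δ, ∀ i j, i ≤ j → j < θ.ord → f β i ≤ f β j) ∧
  (∀ α β, α < β → β < δ → ltStar θ (f α) (f β)) ∧
  (∀ β < δ, θ < Ordinal.cof β → ∃ C, IsClubIn C β ∧ ∃ i < θ.ord,
    ∀ α ∈ C, ∀ j, i ≤ j → j < θ.ord → f α j < f β j)

/-- `γ_f`: the least ordinal strictly above all values of the sequence. -/
def seqBound (θ : Cardinal) (δ : Ordinal) (f : Ordinal → Ordinal → Ordinal) : Ordinal :=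
  sInf {γ | ∀ β < δ, ∀ i < θ.ord, f β i < γ}

/-- `g` is an exact upper bound for `⟨f β : β < δ⟩` with respect to `<*` on `θ`. -/
def IsEub (θ : Cardinal) (δ : Ordinal) (f : Ordinal → Ordinal → Ordinal)
    (g : Ordinal → Ordinal) : Prop :=
  (∀ β < δ, ltStar θ (f β) g) ∧
  ∀ h : Ordinal → Ordinal, ltStar θ h g → ∃ β < δ, ltStar θ h (f β)

/-- The simultaneous stationary reflection principle `R(lam, θ)`. -/
def RPrinciple (lam θ : Cardinal) : Prop :=
  ∃ S ⊆ Set.Iio lam.ord, IsStationaryIn S lam.ord ∧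
    ∀ T : Ordinal → Set Ordinal,
      (∀ j < θ.ord, T j ⊆ S ∧ IsStationaryIn (T j) lam.ord) →
      ∃ α < lam.ord, ℵ₀ < Ordinal.cof α ∧
        ∀ j < θ.ord, IsStationaryIn (T j ∩ Set.Iio α) α

/-- A `□_κ`-sequence. -/
def IsSquareSeq (κ : Cardinal) (C : Ordinal → Set Ordinal) : Prop :=
  ∀ β < (Order.succ κ).ord, Order.IsSuccLimit β →
    IsClubIn (C β) β ∧ otp (C β) ≤ κ.ord ∧
    ∀ α ∈ C β, 0 < α → IsAccPt (C β) α → C β ∩ Set.Iio α = C α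

/-- The square principle `□_κ`. -/
def SquarePrinciple (κ : Cardinal) : Prop := ∃ C, IsSquareSeq κ C

/-- `f <* g` mod finite on `B ⊆ ω`. -/
def ltStarB (B : Set ℕ) (f g : ℕ → Ordinal) : Prop :=
  ∃ m, ∀ n ∈ B, m ≤ n → f n < g n

/-- `g` is an exact upper bound for `⟨f α : α < δ⟩` with respect to `<*` mod finite on `B`. -/
def IsEubB (B : Set ℕ) (δ : Ordinal) (f : Ordinal → ℕ → Ordinal) (g : ℕ → Ordinal) : Prop :=
  (∀ α < δ, ltStarB B (f α) g) ∧
  ∀ h : ℕ → Ordinal, ltStarB B h g → ∃ α < δ, ltStarB B h (f α)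

/-- A scale of length `ℵ_{ω+1}` in `∏_{n ∈ B} ℵ_n`. -/
def IsScale (B : Set ℕ) (f : Ordinal → ℕ → Ordinal) : Prop :=
  (∀ α < (Cardinal.aleph (Ordinal.omega0 + 1)).ord, ∀ n ∈ B, f α n < (Cardinal.aleph n).ord) ∧
  (∀ α β, α < β → β < (Cardinal.aleph (Ordinal.omega0 + 1)).ord → ltStarB B (f α) (f β)) ∧
  (∀ g : ℕ → Ordinal, (∀ n ∈ B, g n < (Cardinal.aleph n).ord) →
    ∃ α < (Cardinal.aleph (Ordinal.omega0 + 1)).ord, ltStarB B g (f α))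

theorem iterSucc_zero (θ : Cardinal) : iterSucc θ 0 = θ :=
  Ordinal.limitRecOn_zero ..

theorem iterSucc_succ (θ : Cardinal) (o : Ordinal) :
    iterSucc θ (Order.succ o) = Order.succ (iterSucc θ o) :=
  Ordinal.limitRecOn_add_one ..

theorem iterSucc_of_isSuccLimit (θ : Cardinal) {o : Ordinal} (ho : Order.IsSuccLimit o) :
    iterSucc θ o = ⨆ i : Iio o, iterSucc θ i :=
  Ordinal.limitRecOn_limit _ _ _ _ ho

theorem isNormal_iterSucc (θ : Cardinal.{u}) :
    Order.IsNormal (iterSucc θ : Ordinal.{u} → Cardinal.{u}) := by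
  refine .of_succ_lt (fun o => ?_) fun {o} ho => ?_
  · rw [iterSucc_succ]
    exact Order.lt_succ _
  · rw [iterSucc_of_isSuccLimit θ ho, Set.image_eq_range]
    have : Nonempty (Iio o) := ⟨⟨0, ho.pos⟩⟩
    exact isLUB_ciSup Cardinal.bddAbove_of_small

theorem cof_ord_iterSucc_of_isSuccLimit (θ : Cardinal.{u}) {o : Ordinal.{u}}
    (ho : Order.IsSuccLimit o) :
    (iterSucc θ o).ord.cof = o.cof :=
  Ordinal.cof_map_of_isNormal (Cardinal.isNormal_ord.comp (isNormal_iterSucc θ)) ho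

/-- `c` is some `θ^{+ρ}` with `0 < ρ < η`: regular if `ρ` is a successor, of cofinality
`cf ρ ≤ |ρ| < θ` if `ρ` is a limit. -/
theorem cof_ord_ne_of_lt_iterSucc {θ c : Cardinal} {η : Ordinal} (hθ : ℵ₀ ≤ θ) (hη : η < θ.ord)
    (hθc : θ < c) (hc : c < iterSucc θ η) : c.ord.cof ≠ θ := by
  have hnormal := isNormal_iterSucc θ
  obtain ⟨ρ, hρc, hcρ⟩ := hnormal.exists_map_le_lt_map_succ_of_exists_ge ⟨η, hc.le⟩
    (by rw [Ordinal.bot_eq_zero, iterSucc_zero]; exact hθc.le)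
  rw [iterSucc_succ, Order.lt_succ_iff] at hcρ
  obtain rfl : iterSucc θ ρ = c := le_antisymm hρc hcρ
  have hρη : ρ < η := hnormal.strictMono.lt_iff_lt.1 hc
  rcases Ordinal.zero_or_succ_or_isSuccLimit ρ with rfl | ⟨σ, rfl⟩ | hlim
  · rw [iterSucc_zero] at hθc
    exact absurd hθc (lt_irrefl θ)
  · have hθσ : θ ≤ iterSucc θ σ := (iterSucc_zero θ).ge.trans (hnormal.monotone zero_le)
    rw [iterSucc_succ] at hθc ⊢
    rw [(Cardinal.isRegular_succ (hθ.trans hθσ)).cof_ord]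
    exact hθc.ne'
  · rw [cof_ord_iterSucc_of_isSuccLimit θ hlim]
    exact ((Ordinal.cof_le_card ρ).trans_lt (Cardinal.lt_ord.1 (hρη.trans hη))).ne

theorem exists_mapsTo_Iio_ord_injOn {E : Set Ordinal.{u}} {c : Cardinal.{u}}
    (h : #E ≤ Cardinal.lift.{u + 1} c) :
    ∃ f : Ordinal → Ordinal, MapsTo f E (Iio c.ord) ∧ InjOn f E := by
  rw [← Cardinal.card_ord c, ← Cardinal.mk_Iio_ordinal] at h
  obtain ⟨e⟩ := h
  classical
  refine ⟨fun x => if hx : x ∈ E then e ⟨x, hx⟩ else 0, fun x hx => by simp [hx],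
    fun x hx y hy hxy => ?_⟩
  simpa [hx, hy, Subtype.val_inj] using hxy

theorem mk_sep_le_lift_card_add_one {E : Set Ordinal.{u}} {f : Ordinal → Ordinal} (hf : InjOn f E)
    (ι : Ordinal.{u}) : #{x ∈ E | f x ≤ ι} ≤ Cardinal.lift.{u + 1} (ι + 1).card := by
  rw [← Cardinal.mk_Iio_ordinal, ← Cardinal.mk_image_eq_of_injOn f _ (hf.mono (sep_subset _ _))]
  exact Cardinal.mk_le_mk_of_subset fun _ ⟨x, hx, hfx⟩ => hfx ▸ Order.lt_add_one_iff.2 hx.2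

theorem isClubIn_setOf_forall_lt {lam : Cardinal.{u}} (hlam : lam.IsRegular) (hlam₀ : ℵ₀ < lam)
    {h : Ordinal.{u} → Ordinal.{u}} (hh : ∀ α < lam.ord, h α < lam.ord) :
    IsClubIn {β | β < lam.ord ∧ ∀ α < β, h α < β} lam.ord := by
  let F : Ordinal → Ordinal := fun b => ⨆ α : Iio b, Order.succ (h α)
  have hF (b : Ordinal) (hb : b < lam.ord) : F b < lam.ord := by
    refine Ordinal.lift_iSup_lt_of_lt_cof ?_ fun α =>
      (Cardinal.isSuccLimit_ord hlam.aleph0_le).succ_lt (hh α (α.2.trans hb))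
    rw [Cardinal.mk_Iio_ordinal, Cardinal.lift_lift, ← Ordinal.lift_cof, hlam.cof_ord,
      Cardinal.lift_lt]
    exact Cardinal.lt_ord.1 hb
  have hFh (b α : Ordinal) (hα : α < b) : h α < F b :=
    (Order.lt_succ _).trans_le (Ordinal.le_iSup _ (⟨α, hα⟩ : Iio b))
  refine ⟨fun β hβ => hβ.1, fun γ hγ => ?_, fun γ hγ _ hacc => ⟨hγ, fun α hα => ?_⟩⟩
  · refine ⟨Ordinal.nfp F γ, ⟨Cardinal.nfp_lt_ord_of_isRegular hlam hlam₀.ne' hF hγ,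
      fun α hα => ?_⟩, Ordinal.le_nfp F γ⟩
    obtain ⟨n, hn⟩ := Ordinal.lt_nfp_iff.1 hα
    have hiter := Ordinal.iterate_le_nfp F γ (n + 1)
    rw [Function.iterate_succ_apply'] at hiter
    exact (hFh _ α hn).trans_le hiter
  · obtain ⟨ε, hε, hαε, hεγ⟩ := hacc α hα
    exact (hε.2 α hαε).trans hεγ

section CoveringMatrix

variable {θ lam : Cardinal.{u}} {D : Ordinal.{u} → Ordinal.{u} → Set Ordinal.{u}}

theorem IsCoveringMatrix.subset_Iio (hD : IsCoveringMatrix θ lam D) {i β : Ordinal}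
    (hβ : β < lam.ord) (hi : i < θ.ord) : D i β ⊆ Iio β :=
  (hD.1 β hβ).subset.trans' (subset_biUnion_of_mem (u := fun i => D i β) hi)

theorem IsCoveringMatrix.exists_mem (hD : IsCoveringMatrix θ lam D) {β x : Ordinal}
    (hβ : β < lam.ord) (hx : x < β) : ∃ i < θ.ord, x ∈ D i β := by
  rw [← mem_Iio, ← hD.1 β hβ] at hx
  simpa using hx

theorem IsCoveringMatrix.mono (hD : IsCoveringMatrix θ lam D) {β i j : Ordinal}
    (hβ : β < lam.ord) (hij : i ≤ j) (hj : j < θ.ord) : D i β ⊆ D j β := by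
  rcases hij.eq_or_lt with rfl | hij
  · rfl
  · exact hD.2.1 β hβ i j hij hj

theorem IsCoveringMatrix.exists_isUnboundedIn (hD : IsCoveringMatrix θ lam D) {β : Ordinal}
    (hβ : β < lam.ord) (hcof : θ < β.cof) : ∃ i < θ.ord, IsUnboundedIn (D i β) β := by
  by_contra! hbdd
  simp only [IsUnboundedIn, not_forall, not_exists, not_and, not_le] at hbdd
  choose b hb hbD using fun i : Iio θ.ord => hbdd i i.2
  have hsup : ⨆ i, b i < β := by
    refine Ordinal.lift_iSup_lt_of_lt_cof ?_ hb
    rw [Cardinal.mk_Iio_ordinal, Cardinal.card_ord, Cardinal.lift_lift, ← Ordinal.lift_cof,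
      Cardinal.lift_lt]
    exact hcof
  obtain ⟨i, hi, hmem⟩ := hD.exists_mem hβ hsup
  exact (hbD ⟨i, hi⟩ _ hmem).not_ge (Ordinal.le_iSup b ⟨i, hi⟩)

end CoveringMatrix

def IsPushdownLevel (θ lam : Cardinal.{u}) (D : Ordinal.{u} → Ordinal.{u} → Set Ordinal.{u})
    (E : Set Ordinal.{u}) (g : Ordinal.{u}) : Prop :=
  ∀ β < lam.ord, ∀ i < θ.ord, ∃ j < θ.ord, E ∩ D i β ⊆ D j g

section PushdownLevel

variable {θ lam : Cardinal.{u}} {D : Ordinal.{u} → Ordinal.{u} → Set Ordinal.{u}}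
  {E : Set Ordinal.{u}} {f : Ordinal.{u} → Ordinal.{u}} {o g : Ordinal.{u}}

theorem LocallyDownwardCoherent.exists_isPushdownLevel (hldc : LocallyDownwardCoherent θ lam D)
    (hE : E ⊆ Iio lam.ord) (hcard : #E ≤ Cardinal.lift.{u + 1} θ) :
    ∃ g < lam.ord, IsPushdownLevel θ lam D E g := by
  obtain ⟨g, hg, hpush⟩ := hldc E hE hcard
  refine ⟨g, hg, fun β hβ i hi => ?_⟩
  obtain ⟨j, hj, hsub⟩ := hpush β hβ i hi
  exact ⟨j, hj, hsub.trans inter_subset_right⟩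

theorem IsPushdownLevel.mono_set {E' : Set Ordinal} (h : IsPushdownLevel θ lam D E g)
    (hE' : E' ⊆ E) : IsPushdownLevel θ lam D E' g :=
  fun β hβ i hi => (h β hβ i hi).imp fun _ ⟨hj, hsub⟩ =>
    ⟨hj, (inter_subset_inter_left _ hE').trans hsub⟩

theorem IsPushdownLevel.mono_level (hD : IsCoveringMatrix θ lam D) {g' : Ordinal}
    (h : IsPushdownLevel θ lam D E g) (hgg' : g ≤ g') (hg' : g' < lam.ord) :
    IsPushdownLevel θ lam D E g' := by
  rcases hgg'.eq_or_lt with rfl | hgg'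
  · exact h
  intro β hβ i hi
  obtain ⟨j, hj, hsub⟩ := h β hβ i hi
  obtain ⟨k, hk, hsub'⟩ := hD.2.2 g g' hgg' hg' j hj
  exact ⟨k, hk, hsub.trans hsub'⟩

/-- If every column `j` at `g` missed a point `v j` of `E ∩ D i β`, these `θ` points would have
no pushdown level `g`. -/
theorem isPushdownLevel_of_forall_small
    (h : ∀ X ⊆ E, #X ≤ Cardinal.lift.{u + 1} θ → IsPushdownLevel θ lam D X g) :
    IsPushdownLevel θ lam D E g := by
  intro β hβ i hi
  by_contra! hmiss
  choose v hvE hvg using fun j : Iio θ.ord => not_subset.1 (hmiss j j.2)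
  have hcard : #(range v) ≤ Cardinal.lift.{u + 1} θ :=
    mk_range_le.trans (by rw [Cardinal.mk_Iio_ordinal, Cardinal.card_ord])
  obtain ⟨j, hj, hsub⟩ := h (range v) (range_subset_iff.2 fun j => (hvE j).1) hcard β hβ i hi
  exact hvg ⟨j, hj⟩ (hsub ⟨mem_range_self _, (hvE _).2⟩)

theorem IsPushdownLevel.iUnion (hθ : θ.IsRegular) (hD : IsCoveringMatrix θ lam D)
    {ι : Type*} {S : ι → Set Ordinal} (hg : g < lam.ord)
    (hι : Cardinal.lift.{u} #ι < Cardinal.lift θ) (h : ∀ n, IsPushdownLevel θ lam D (S n) g) :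
    IsPushdownLevel θ lam D (⋃ n, S n) g := by
  intro β hβ i hi
  choose j hj hsub using fun n => h n β hβ i hi
  have hsup : ⨆ n, j n < θ.ord :=
    Ordinal.lift_iSup_lt_of_lt_cof (by rwa [← Ordinal.lift_cof, hθ.cof_ord]) hj
  refine ⟨_, hsup, fun x ⟨hxE, hxD⟩ => ?_⟩
  obtain ⟨n, hn⟩ := mem_iUnion.1 hxE
  have hjn : j n ≤ ⨆ n, j n := le_ciSup ⟨θ.ord, forall_mem_range.2 fun n => (hj n).le⟩ n
  exact hD.mono hg hjn hsup (hsub n ⟨hn, hxD⟩)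

theorem exists_isPushdownLevel_forall (hlam : lam.IsRegular) (hD : IsCoveringMatrix θ lam D)
    {ι : Type*} {S : ι → Set Ordinal} (hι : Cardinal.lift.{u} #ι < Cardinal.lift lam)
    (h : ∀ n, ∃ g < lam.ord, IsPushdownLevel θ lam D (S n) g) :
    ∃ g < lam.ord, ∀ n, IsPushdownLevel θ lam D (S n) g := by
  choose g hg hpush using h
  have hsup : ⨆ n, g n < lam.ord :=
    Ordinal.lift_iSup_lt_of_lt_cof (by rwa [← Ordinal.lift_cof, hlam.cof_ord]) hg
  have hgn n : g n ≤ ⨆ n, g n := le_ciSup ⟨lam.ord, forall_mem_range.2 fun n => (hg n).le⟩ n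
  exact ⟨_, hsup, fun n => (hpush n).mono_level hD (hgn n) hsup⟩

theorem isPushdownLevel_of_cof_lt (hθ : θ.IsRegular) (hD : IsCoveringMatrix θ lam D)
    (hg : g < lam.ord) (hf : MapsTo f E (Iio o)) (ho : o.cof < θ)
    (h : ∀ ι < o, IsPushdownLevel θ lam D {x ∈ E | f x ≤ ι} g) : IsPushdownLevel θ lam D E g := by
  obtain ⟨s, hs, hscard⟩ := Order.exists_cof_eq (Iio o)
  refine (IsPushdownLevel.iUnion (S := fun ι : s => {x ∈ E | f x ≤ ι.1.1}) hθ hD hg ?_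
    fun ι => h _ ι.1.2).mono_set fun x hx => ?_
  · rw [hscard, Ordinal.cof_Iio, ← Ordinal.lift_cof, Cardinal.lift_lift, Cardinal.lift_lt]
    exact ho
  · obtain ⟨ι, hι, hle⟩ := hs ⟨f x, hf hx⟩
    exact mem_iUnion.2 ⟨⟨ι, hι⟩, hx, hle⟩

theorem isPushdownLevel_of_lt_cof (hf : MapsTo f E (Iio o)) (ho : θ < o.cof)
    (h : ∀ ι < o, IsPushdownLevel θ lam D {x ∈ E | f x ≤ ι} g) : IsPushdownLevel θ lam D E g :=
  isPushdownLevel_of_forall_small fun X hXE hX => by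
    have hbdd : BddAbove (f '' X) := ⟨o, forall_mem_image.2 fun x hx => (hf (hXE hx)).le⟩
    have hsup : sSup (f '' X) < o := by
      refine Ordinal.sSup_lt_of_lt_cof ?_ (forall_mem_image.2 fun x hx => hf (hXE hx))
      rw [← Ordinal.lift_cof]
      exact Cardinal.mk_image_le.trans_lt (hX.trans_lt (Cardinal.lift_lt.2 ho))
    exact (h _ hsup).mono_set fun x hx => ⟨hXE hx, le_csSup hbdd (mem_image_of_mem f hx)⟩

theorem exists_isPushdownLevel_of_inaccessible (hθ : ℵ₀ ≤ θ) (hlam : lam.IsRegular)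
    (hθlam : θ < lam) (hpow : ∀ κ < lam, κ ^ θ < lam) (hD : IsCoveringMatrix θ lam D)
    (hldc : LocallyDownwardCoherent θ lam D) (hE : E ⊆ Iio lam.ord)
    (hcard : #E < Cardinal.lift.{u + 1} lam) : ∃ g < lam.ord, IsPushdownLevel θ lam D E g := by
  obtain ⟨κ, hκ⟩ := Cardinal.mem_range_lift_of_le hcard.le
  have hκlam : κ < lam := Cardinal.lift_lt.1 (hκ ▸ hcard)
  let SmallSubset := {X : Set Ordinal // X ⊆ E ∧ #X ≤ Cardinal.lift.{u + 1} θ}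
  have hsmall : #SmallSubset < Cardinal.lift.{u + 1} lam :=
    calc _ ≤ max #E ℵ₀ ^ Cardinal.lift.{u + 1} θ := Cardinal.mk_bounded_subset_le E _
      _ = Cardinal.lift (max κ ℵ₀ ^ θ) := by
        rw [← hκ, Cardinal.lift_power, Cardinal.lift_max, Cardinal.lift_aleph0]
      _ < Cardinal.lift lam :=
        Cardinal.lift_lt.2 (hpow _ (max_lt hκlam (hθ.trans_lt hθlam)))
  obtain ⟨g, hg, hpush⟩ := exists_isPushdownLevel_forall (S := fun X : SmallSubset => X.1)
    hlam hD (by rwa [Cardinal.lift_id'.{u, u + 1}])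
    fun X => hldc.exists_isPushdownLevel (X.2.1.trans hE) X.2.2
  exact ⟨g, hg, isPushdownLevel_of_forall_small fun X hX hXθ => hpush ⟨X, hX, hXθ⟩⟩

/-- By induction on `c`: enumerate `E` in order type `c` and bound the pushdown levels of its
initial segments; the segments cover every `≤ θ`-sized subset of `E` when `cf c > θ`, and
fewer than `θ` of them cover `E` when `cf c < θ`. -/
theorem exists_isPushdownLevel_of_forall_cof_ne (hθ : θ.IsRegular) (hlam : lam.IsRegular)
    (hcof : ∀ c, θ < c → c < lam → c.ord.cof ≠ θ) (hD : IsCoveringMatrix θ lam D)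
    (hldc : LocallyDownwardCoherent θ lam D) {c : Cardinal.{u}} (hc : c < lam)
    (hE : E ⊆ Iio lam.ord) (hcard : #E ≤ Cardinal.lift.{u + 1} c) :
    ∃ g < lam.ord, IsPushdownLevel θ lam D E g := by
  induction c using WellFoundedLT.induction generalizing E with
  | ind c IH =>
  rcases le_or_gt c θ with hcθ | hθc
  · exact hldc.exists_isPushdownLevel hE (hcard.trans (Cardinal.lift_le.2 hcθ))
  obtain ⟨f, hfE, hf⟩ := exists_mapsTo_Iio_ord_injOn hcard
  have hseg (ι : Iio c.ord) : ∃ g < lam.ord, IsPushdownLevel θ lam D {x ∈ E | f x ≤ ι} g := by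
    have hι : (ι.1 + 1).card < c :=
      Cardinal.lt_ord.1 ((Cardinal.isSuccLimit_ord (hθ.aleph0_le.trans hθc.le)).add_one_lt ι.2)
    exact IH _ hι (hι.trans hc) ((sep_subset _ _).trans hE) (mk_sep_le_lift_card_add_one hf ι)
  obtain ⟨g, hg, hpush⟩ := exists_isPushdownLevel_forall hlam hD
    (by simpa [Cardinal.mk_Iio_ordinal] using hc) hseg
  refine ⟨g, hg, ?_⟩
  rcases lt_trichotomy c.ord.cof θ with hlt | heq | hgt
  · exact isPushdownLevel_of_cof_lt hθ hD hg hfE hlt fun ι hι => hpush ⟨ι, hι⟩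
  · exact absurd heq (hcof c hθc hc)
  · exact isPushdownLevel_of_lt_cof hfE hgt fun ι hι => hpush ⟨ι, hι⟩

theorem exists_isPushdownLevel (hθ : θ.IsRegular) (hlam : lam.IsRegular) (hθlam : θ < lam)
    (hyp : (∃ η : Ordinal, 1 < η ∧ η < θ.ord ∧ lam = iterSucc θ η) ∨ ∀ κ < lam, κ ^ θ < lam)
    (hD : IsCoveringMatrix θ lam D) (hldc : LocallyDownwardCoherent θ lam D)
    (hE : E ⊆ Iio lam.ord) (hcard : #E < Cardinal.lift.{u + 1} lam) :
    ∃ g < lam.ord, IsPushdownLevel θ lam D E g := by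
  rcases hyp with ⟨η, -, hη, rfl⟩ | hpow
  · obtain ⟨c, hc⟩ := Cardinal.mem_range_lift_of_le hcard.le
    rw [← hc, Cardinal.lift_lt] at hcard
    exact exists_isPushdownLevel_of_forall_cof_ne hθ hlam
      (fun c hθc hc => cof_ord_ne_of_lt_iterSucc hθ.aleph0_le hη hθc hc) hD hldc hcard hE hc.ge
  · exact exists_isPushdownLevel_of_inaccessible hθ.aleph0_le hlam hθlam hpow hD hldc hE hcard

theorem mem_goodPoints_of_forall_isPushdownLevel (hD : IsCoveringMatrix θ lam D) {β : Ordinal}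
    (hβ : β < lam.ord) (hcof : θ < β.cof)
    (h : ∀ γ < β, ∃ g < β, IsPushdownLevel θ lam D (Iio γ) g) : β ∈ goodPoints θ lam D := by
  obtain ⟨i, hi, hunb⟩ := hD.exists_isUnboundedIn hβ hcof
  refine ⟨hβ, hcof, D i β, hD.subset_Iio hβ hi, hunb, fun γ hγ => ?_⟩
  obtain ⟨g, hgβ, hpush⟩ := h γ hγ
  obtain ⟨j, hj, hsub⟩ := hpush β hβ i hi
  exact ⟨g, hgβ, j, hj, inter_comm (Iio γ) (D i β) ▸ hsub⟩

end PushdownLevel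

/-- If `lam = θ^{+η}` for some `1 < η < θ` or `lam` is `θ`-inaccessible, and
`D` is a locally downward coherent `θ`-covering matrix for `lam`, then `S^lam_{>θ} \\ A_D`
is non-stationary in `lam`. -/
theorem stmt12 (θ lam : Cardinal) (hθ : θ.IsRegular) (hlam : lam.IsRegular) (hθlam : θ < lam)
    (hyp : (∃ η : Ordinal, 1 < η ∧ η < θ.ord ∧ lam = iterSucc θ η) ∨ ∀ κ < lam, κ ^ θ < lam)
    (D : Ordinal → Ordinal → Set Ordinal) (hD : IsCoveringMatrix θ lam D)
    (hldc : LocallyDownwardCoherent θ lam D) :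
    ¬ IsStationaryIn ({β | β < lam.ord ∧ θ < Ordinal.cof β} \ goodPoints θ lam D)
      lam.ord := by
  have hlevel (α : Ordinal) (hα : α < lam.ord) :
      ∃ g < lam.ord, IsPushdownLevel θ lam D (Iio α) g :=
    exists_isPushdownLevel hθ hlam hθlam hyp hD hldc (Iio_subset_Iio hα.le)
      (by rwa [Cardinal.mk_Iio_ordinal, Cardinal.lift_lt, ← Cardinal.lt_ord])
  choose! h hh hpush using hlevel
  intro hstat
  obtain ⟨β, ⟨⟨hβ, hcof⟩, hbad⟩, -, hclosed⟩ :=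
    hstat _ (isClubIn_setOf_forall_lt hlam (hθ.aleph0_le.trans_lt hθlam) hh)
  exact hbad (mem_goodPoints_of_forall_isPushdownLevel hD hβ hcof
    fun γ hγ => ⟨h γ, hclosed γ hγ, hpush γ (hγ.trans hβ)⟩)

end
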